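/- arXiv:2603.28572 — 2 statements merged into one kernel-verified Lean document; each statement's English description precedes it below -/
import Mathlib

section
/- Let $g_i \sim \mathrm{Gamma}(a,1)$ and $g_j \sim \mathrm{Gamma}(1,1)$ (i.e., exponential with rate 1) for $j \neq i$, all independent, with $K$ variables total. Then the probability that $g_i$ is the maximum equals $\sum_{k=0}^{K-1} \frac{(-1)^k \binom{K-1}{k}}{(k+1)^{a}}$. -/
/-!
Conditioning on `g i = x`, independence turns the event into `K - 1` independent events
`g j ≤ x`, each of probability `1 - e^{-x}`; so the probability is `∫ (1 - e^{-x})^{K-1} dΓ(a,1)`.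
Expanding binomially reduces it to the Laplace transform of the gamma law,
`∫ e^{-kx} dΓ(a,1) = (k+1)^{-a}`, which holds because `e^{-sx}` times the `Γ(a,r)` density is
`(r/(r+s))^a` times the `Γ(a,r+s)` density.
-/

open MeasureTheory ProbabilityTheory Real Set Finset

lemma one_sub_pow_eq_sum {R : Type*} [CommRing R] (y : R) (n : ℕ) :
    (1 - y) ^ n = ∑ k ∈ range (n + 1), (-1) ^ k * (n.choose k : R) * y ^ k := by
  rw [sub_eq_neg_add, add_pow]
  refine sum_congr rfl fun k _ => ?_
  rw [one_pow, mul_one, neg_pow]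
  ring

namespace ProbabilityTheory

lemma gammaPDFReal_mul_exp_neg_mul {a r s : ℝ} (hr : 0 < r) (hrs : 0 < r + s) (x : ℝ) :
    gammaPDFReal a r x * exp (-(s * x)) = (r / (r + s)) ^ a * gammaPDFReal a (r + s) x := by
  unfold gammaPDFReal
  split_ifs
  · rw [div_rpow hr.le hrs.le]
    field_simp
    rw [mul_assoc, ← exp_add]
    ring_nf
  · simp

lemma measurable_gammaPDF (a r : ℝ) : Measurable (gammaPDF a r) :=
  (measurable_gammaPDFReal a r).ennreal_ofReal

lemma lintegral_exp_neg_mul_gammaMeasure {a r s : ℝ} (ha : 0 < a) (hr : 0 < r)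
    (hrs : 0 < r + s) :
    ∫⁻ x, ENNReal.ofReal (exp (-(s * x))) ∂gammaMeasure a r
      = ENNReal.ofReal ((r / (r + s)) ^ a) := by
  have hdensity : ∀ x, gammaPDF a r x * ENNReal.ofReal (exp (-(s * x)))
      = ENNReal.ofReal ((r / (r + s)) ^ a) * gammaPDF a (r + s) x := fun x => by
    rw [gammaPDF, gammaPDF, ← ENNReal.ofReal_mul (gammaPDFReal_nonneg ha hr x),
      ← ENNReal.ofReal_mul (by positivity), gammaPDFReal_mul_exp_neg_mul hr hrs]
  rw [gammaMeasure, lintegral_withDensity_eq_lintegral_mul _ (measurable_gammaPDF a r)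
    (by fun_prop)]
  simp only [Pi.mul_apply, hdensity]
  rw [lintegral_const_mul _ (measurable_gammaPDF a (r + s)),
    lintegral_gammaPDF_eq_one ha hrs, mul_one]

lemma integrable_exp_neg_mul_gammaMeasure {a r s : ℝ} (ha : 0 < a) (hr : 0 < r)
    (hrs : 0 < r + s) : Integrable (fun x => exp (-(s * x))) (gammaMeasure a r) := by
  refine ⟨by fun_prop, ?_⟩
  rw [hasFiniteIntegral_iff_ofReal (ae_of_all _ fun x => (exp_pos _).le),
    lintegral_exp_neg_mul_gammaMeasure ha hr hrs]
  exact ENNReal.ofReal_lt_top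

lemma integral_exp_neg_mul_gammaMeasure {a r s : ℝ} (ha : 0 < a) (hr : 0 < r)
    (hrs : 0 < r + s) : ∫ x, exp (-(s * x)) ∂gammaMeasure a r = (r / (r + s)) ^ a := by
  rw [integral_eq_lintegral_of_nonneg_ae (ae_of_all _ fun x => (exp_pos _).le) (by fun_prop),
    lintegral_exp_neg_mul_gammaMeasure ha hr hrs, ENNReal.toReal_ofReal (by positivity)]

lemma ae_nonneg_gammaMeasure (a r : ℝ) : ∀ᵐ x ∂gammaMeasure a r, 0 ≤ x := by
  simp only [ae_iff, not_le, Iio_def]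
  rw [gammaMeasure, withDensity_apply _ measurableSet_Iio, lintegral_gammaPDF_of_nonpos le_rfl]

lemma expMeasure_Iic_of_nonneg {t x : ℝ} (ht : 0 < t) (hx : 0 ≤ x) :
    expMeasure t (Iic x) = ENNReal.ofReal (1 - exp (-(t * x))) := by
  have := isProbabilityMeasure_expMeasure ht
  rw [← ofReal_cdf, cdf_expMeasure_eq ht, if_pos hx]

lemma lintegral_expMeasure_Iic_pow_gammaMeasure {a r t : ℝ} (ha : 0 < a) (hr : 0 < r)
    (ht : 0 < t) (n : ℕ) :
    ∫⁻ x, expMeasure t (Iic x) ^ n ∂gammaMeasure a r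
      = ENNReal.ofReal (∑ k ∈ range (n + 1),
          (-1) ^ k * (n.choose k : ℝ) * (r / (r + k * t)) ^ a) := by
  have hrkt : ∀ k : ℕ, 0 < r + k * t := fun k => by positivity
  have hbinom : ∀ x, (1 - exp (-(t * x))) ^ n
      = ∑ k ∈ range (n + 1), (-1) ^ k * (n.choose k : ℝ) * exp (-((k * t) * x)) := fun x => by
    simp_rw [one_sub_pow_eq_sum, ← exp_nat_mul, mul_neg, mul_assoc]
  have hint : Integrable (fun x => (1 - exp (-(t * x))) ^ n) (gammaMeasure a r) := by
    simp_rw [hbinom]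
    exact integrable_finsetSum _ fun k _ =>
      (integrable_exp_neg_mul_gammaMeasure ha hr (hrkt k)).const_mul _
  have hcdf_nonneg : ∀ x, 0 ≤ x → 0 ≤ 1 - exp (-(t * x)) := fun x hx =>
    sub_nonneg.2 (exp_le_one_iff.2 (by nlinarith))
  calc ∫⁻ x, expMeasure t (Iic x) ^ n ∂gammaMeasure a r
      = ∫⁻ x, ENNReal.ofReal ((1 - exp (-(t * x))) ^ n) ∂gammaMeasure a r := by
        refine lintegral_congr_ae ((ae_nonneg_gammaMeasure a r).mono fun x hx => ?_)
        dsimp only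
        rw [expMeasure_Iic_of_nonneg ht hx, ENNReal.ofReal_pow (hcdf_nonneg x hx)]
    _ = ENNReal.ofReal (∫ x, (1 - exp (-(t * x))) ^ n ∂gammaMeasure a r) :=
        (ofReal_integral_eq_lintegral_ofReal hint
          ((ae_nonneg_gammaMeasure a r).mono fun x hx => pow_nonneg (hcdf_nonneg x hx) n)).symm
    _ = _ := by
        simp_rw [hbinom]
        rw [integral_finsetSum _ fun k _ =>
          (integrable_exp_neg_mul_gammaMeasure ha hr (hrkt k)).const_mul _]
        simp_rw [integral_const_mul, integral_exp_neg_mul_gammaMeasure ha hr (hrkt _)]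

lemma measure_forall_le_eq_lintegral_prod {Ω ι : Type*} [MeasurableSpace Ω] {μ : Measure Ω}
    [Fintype ι] [DecidableEq ι] {g : ι → Ω → ℝ} (hg : ∀ j, Measurable (g j))
    (hindep : iIndepFun g μ) (i : ι) :
    μ {ω | ∀ j, g j ω ≤ g i ω}
      = ∫⁻ x, ∏ j ∈ {i}ᶜ, μ.map (g j) (Iic x) ∂μ.map (g i) := by
  have := hindep.isProbabilityMeasure
  set T : Finset ι := {i}ᶜ
  set Y : Ω → T → ℝ := fun ω j => g j ω
  have hY : Measurable Y := measurable_pi_lambda _ fun j => hg j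
  have hindepY : IndepFun (g i) Y μ := by
    exact (hindep.indepFun_finset {i} T (by simp [T]) hg).comp
      (measurable_pi_apply ⟨i, mem_singleton_self i⟩) measurable_id
  set B : Set (ℝ × (T → ℝ)) := {p | ∀ j, p.2 j ≤ p.1}
  have hB : MeasurableSet B := by
    simp only [B, ofPred_forall]
    exact .iInter fun j => measurableSet_le (by fun_prop) (by fun_prop)
  have hevent : {ω | ∀ j, g j ω ≤ g i ω} = (fun ω => (g i ω, Y ω)) ⁻¹' B := by
    ext ω
    refine ⟨fun h j => h j, fun h j => ?_⟩
    by_cases hj : j = i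
    · rw [hj]
    · exact h ⟨j, by simpa [T] using hj⟩
  have hslice : ∀ x, Y ⁻¹' (Prod.mk x ⁻¹' B) = ⋂ j ∈ T, g j ⁻¹' Iic x := fun x => by
    ext ω
    simp [Y, B]
  calc μ {ω | ∀ j, g j ω ≤ g i ω}
      = μ.map (fun ω => (g i ω, Y ω)) B := by
        rw [hevent, Measure.map_apply ((hg i).prodMk hY) hB]
    _ = (μ.map (g i)).prod (μ.map Y) B := by
        rw [hindepY.map_prod_eq_prod_map_map (hg i).aemeasurable hY.aemeasurable]
    _ = ∫⁻ x, μ.map Y (Prod.mk x ⁻¹' B) ∂μ.map (g i) := Measure.prod_apply hB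
    _ = _ := lintegral_congr fun x => by
        rw [Measure.map_apply hY (measurable_prodMk_left hB), hslice,
          hindep.meas_biInter fun j _ => ⟨Iic x, measurableSet_Iic, rfl⟩]
        exact prod_congr rfl fun j _ => (Measure.map_apply (hg j) measurableSet_Iic).symm

end ProbabilityTheory

theorem prob_gamma_is_max_general {Ω : Type*} [MeasurableSpace Ω]
    (μ : Measure Ω)
    {K : ℕ} (hK : 1 ≤ K) (a : ℝ) (ha : 0 < a)
    (g : Fin K → Ω → ℝ) (hmeas : ∀ j, Measurable (g j))
    (hindep : iIndepFun g μ)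
    (i : Fin K)
    (hgi : Measure.map (g i) μ = gammaMeasure a 1)
    (hgj : ∀ j, j ≠ i → Measure.map (g j) μ = expMeasure 1) :
    μ {ω | ∀ j, g j ω ≤ g i ω} =
      ENNReal.ofReal
        (∑ k ∈ Finset.range K,
          (-1 : ℝ) ^ k * ((K - 1).choose k : ℝ) / ((k : ℝ) + 1) ^ a) := by
  have hothers : ∀ x, ∏ j ∈ {i}ᶜ, μ.map (g j) (Iic x) = expMeasure 1 (Iic x) ^ (K - 1) :=
    fun x => by
      rw [prod_congr rfl fun j hj => by rw [hgj j (by simpa using hj)], prod_const,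
        card_compl, Finset.card_singleton, Fintype.card_fin]
  rw [measure_forall_le_eq_lintegral_prod hmeas hindep i, hgi, lintegral_congr hothers,
    lintegral_expMeasure_Iic_pow_gammaMeasure ha one_pos one_pos, Nat.sub_add_cancel hK]
  congr 1
  refine sum_congr rfl fun k _ => ?_
  rw [mul_one, add_comm, div_rpow zero_le_one (by positivity), one_rpow, mul_one_div]

/-- Let `g i ~ Gamma(a,1)` and `g j ~ Gamma(1,1)` (exponential with rate 1)
for `j ≠ i`, all independent (`K` variables in total). Then the probability
that `g i` is the maximum equals `∑_{k=0}^{K-1} (-1)^k (K-1 choose k) / (k+1)^a`. -/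
theorem prob_gamma_is_max {Ω : Type*} [MeasurableSpace Ω]
    (μ : Measure Ω) [IsProbabilityMeasure μ]
    {K : ℕ} (hK : 1 ≤ K) (a : ℝ) (ha : 0 < a)
    (g : Fin K → Ω → ℝ) (hmeas : ∀ j, Measurable (g j))
    (hindep : iIndepFun g μ)
    (i : Fin K)
    (hgi : Measure.map (g i) μ = gammaMeasure a 1)
    (hgj : ∀ j, j ≠ i → Measure.map (g j) μ = expMeasure 1) :
    μ {ω | ∀ j, g j ω ≤ g i ω} =
      ENNReal.ofReal
        (∑ k ∈ Finset.range K,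
          (-1 : ℝ) ^ k * ((K - 1).choose k : ℝ) / ((k : ℝ) + 1) ^ a) :=
  prob_gamma_is_max_general μ hK a ha g hmeas hindep i hgi hgj
end

section
/- Let $P_v(a, K) = \sum_{k=0}^{K-1} \frac{(-1)^k \binom{K-1}{k}}{(k+1)^{a}}$ for real $a > 0$ and integer $K \geq 1$. Then $P_v(a,K) \in [0,1]$, $P_v(a, K) \to 1$ as $a \to \infty$ (for fixed $K$), and $P_v$ is monotone nondecreasing in $a$. -/
open Filter MeasureTheory Real Set

/-!
Writing `K = n + 1`, the binomial theorem and `∫₀^∞ t^(a-1) e^(-(k+1)t) dt = Γ(a) / (k+1)^a` give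
`Γ(a) P_v(a) = ∫₀^∞ (1 - e^(-t))^n e^(-t) t^(a-1) dt`: `P_v(a)` is the mean of the distribution
function `(1 - e^(-t))^n` of the maximum of `n` exponentials under the `Gamma(a, 1)` law, hence lies
in `[0, 1]`. The `Gamma(b, 1)` density is `t^(b-a)` times the `Gamma(a, 1)` density up to the factor
`Γ(a) / Γ(b)`; as `t^(b-a)` and `(1 - e^(-t))^n` both increase in `t`, Chebyshev's integral
inequality gives `P_v(a) ≤ P_v(b)` for `a ≤ b`. The limit is read off the sum: for `k ≥ 1` the
denominator `(k+1)^a` tends to infinity.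
-/

theorem integral_mul_integral_le_of_monovaryOn {α : Type*} [MeasurableSpace α] {μ : Measure α}
    [SFinite μ] {s : Set α} (hs : MeasurableSet s) {f g w : α → ℝ}
    (hfg : MonovaryOn f g s) (hw : ∀ x ∈ s, 0 ≤ w x) (hw_int : IntegrableOn w s μ)
    (hfw : IntegrableOn (fun x ↦ f x * w x) s μ) (hgw : IntegrableOn (fun x ↦ g x * w x) s μ)
    (hfgw : IntegrableOn (fun x ↦ f x * g x * w x) s μ) :
    (∫ x in s, f x * w x ∂μ) * (∫ x in s, g x * w x ∂μ) ≤
      (∫ x in s, f x * g x * w x ∂μ) * ∫ x in s, w x ∂μ := by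
  have hpair : ∀ᵐ z ∂(μ.restrict s).prod (μ.restrict s),
      0 ≤ (f z.2 - f z.1) * (g z.2 - g z.1) * (w z.1 * w z.2) := by
    rw [Measure.prod_restrict, ae_restrict_iff' (hs.prod hs)]
    exact ae_of_all _ fun z ⟨h1, h2⟩ ↦
      mul_nonneg (hfg.sub_mul_sub_nonneg h1 h2) (mul_nonneg (hw _ h1) (hw _ h2))
  have hexpand : (fun z : α × α ↦ (f z.2 - f z.1) * (g z.2 - g z.1) * (w z.1 * w z.2)) =
      fun z ↦ (w z.1 * (f z.2 * g z.2 * w z.2) + f z.1 * g z.1 * w z.1 * w z.2) -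
        (f z.1 * w z.1 * (g z.2 * w z.2) + g z.1 * w z.1 * (f z.2 * w z.2)) := by
    funext z; ring
  have h₁ := hw_int.mul_prod hfgw
  have h₂ := hfgw.mul_prod hw_int
  have h₃ := hfw.mul_prod hgw
  have h₄ := hgw.mul_prod hfw
  have hsymm := integral_nonneg_of_ae hpair
  rw [hexpand, integral_sub (h₁.fun_add h₂) (h₃.fun_add h₄), integral_add h₁ h₂,
    integral_add h₃ h₄,
    integral_prod_mul w (fun x ↦ f x * g x * w x), integral_prod_mul (fun x ↦ f x * g x * w x) w,
    integral_prod_mul (fun x ↦ f x * w x) (fun x ↦ g x * w x),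
    integral_prod_mul (fun x ↦ g x * w x) (fun x ↦ f x * w x)] at hsymm
  linarith

/-- `voronoiSum n a` is `P_v(a, n + 1)`. -/
noncomputable def voronoiSum (n : ℕ) (a : ℝ) : ℝ :=
  ∑ k ∈ Finset.range (n + 1), (-1 : ℝ) ^ k * (n.choose k : ℝ) / ((k : ℝ) + 1) ^ a

lemma tendsto_voronoiSum_atTop (n : ℕ) : Tendsto (voronoiSum n) atTop (nhds 1) := by
  have hterm : ∀ k : ℕ, Tendsto (fun a : ℝ ↦
      (-1 : ℝ) ^ (k + 1) * (n.choose (k + 1) : ℝ) / ((↑(k + 1) : ℝ) + 1) ^ a) atTop (nhds 0) :=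
    fun k ↦ tendsto_const_nhds.div_atTop
      (tendsto_rpow_atTop_of_base_gt_one _ (by push_cast; linarith [k.cast_nonneg (α := ℝ)]))
  have hsum := (tendsto_finsetSum (Finset.range n) fun k _ ↦ hterm k).add_const 1
  simp only [Finset.sum_const_zero, zero_add] at hsum
  refine hsum.congr fun a ↦ ?_
  simp [voronoiSum, Finset.sum_range_succ' _ n]

lemma one_sub_exp_neg_pow_nonneg (n : ℕ) {t : ℝ} (ht : 0 ≤ t) : 0 ≤ (1 - exp (-t)) ^ n :=
  pow_nonneg (by simpa using exp_le_one_iff.2 (neg_nonpos.2 ht)) n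

lemma one_sub_exp_neg_pow_le_one (n : ℕ) {t : ℝ} (ht : 0 ≤ t) : (1 - exp (-t)) ^ n ≤ 1 :=
  pow_le_one₀ (by simpa using exp_le_one_iff.2 (neg_nonpos.2 ht))
    (by linarith [exp_pos (-t)])

lemma monotoneOn_one_sub_exp_neg_pow (n : ℕ) :
    MonotoneOn (fun t : ℝ ↦ (1 - exp (-t)) ^ n) (Ici 0) := fun s hs t _ hst ↦
  pow_le_pow_left₀ (by simpa using exp_le_one_iff.2 (neg_nonpos.2 (mem_Ici.1 hs)))
    (by linarith [exp_le_exp.2 (neg_le_neg hst)]) n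

lemma integrableOn_one_sub_exp_neg_pow_mul (n : ℕ) {a : ℝ} (ha : 0 < a) :
    IntegrableOn (fun t ↦ (1 - exp (-t)) ^ n * (exp (-t) * t ^ (a - 1))) (Ioi 0) :=
  (GammaIntegral_convergent ha).bdd_mul (by fun_prop : Continuous _).aestronglyMeasurable
    ((ae_restrict_iff' measurableSet_Ioi).2 (ae_of_all _ fun _ ht ↦ by
      rw [norm_of_nonneg (one_sub_exp_neg_pow_nonneg n (le_of_lt ht))]
      exact one_sub_exp_neg_pow_le_one n (le_of_lt ht)))

lemma Gamma_mul_voronoiSum (n : ℕ) {a : ℝ} (ha : 0 < a) :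
    Gamma a * voronoiSum n a = ∫ t in Ioi 0, (1 - exp (-t)) ^ n * (exp (-t) * t ^ (a - 1)) := by
  have hexpand : ∀ t : ℝ, (1 - exp (-t)) ^ n * (exp (-t) * t ^ (a - 1)) =
      ∑ k ∈ Finset.range (n + 1),
        (-1 : ℝ) ^ k * n.choose k * (t ^ (a - 1) * exp (-((k + 1) * t))) := by
    intro t
    rw [show 1 - exp (-t) = -exp (-t) + 1 by ring, add_pow, Finset.sum_mul]
    refine Finset.sum_congr rfl fun k _ ↦ ?_
    rw [neg_pow, ← exp_nat_mul, one_pow, mul_one,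
      show -((k + 1 : ℝ) * t) = k * -t + -t by ring, exp_add]
    ring
  have hterm_int : ∀ k : ℕ, IntegrableOn (fun t : ℝ ↦ t ^ (a - 1) * exp (-((k + 1) * t))) (Ioi 0) :=
    fun k ↦ by
      simpa only [rpow_one, neg_mul] using
        integrableOn_rpow_mul_exp_neg_mul_rpow (p := 1) (by linarith : -1 < a - 1)
          one_pos (by positivity : (0 : ℝ) < k + 1)
  rw [setIntegral_congr_fun measurableSet_Ioi fun t _ ↦ hexpand t,
    integral_finsetSum _ fun k _ ↦ (hterm_int k).const_mul _, voronoiSum, Finset.mul_sum]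
  refine Finset.sum_congr rfl fun k _ ↦ ?_
  rw [integral_const_mul, integral_rpow_mul_exp_neg_mul_Ioi ha (by positivity),
    div_rpow zero_le_one (by positivity), one_rpow]
  field_simp

lemma voronoiSum_mem_Icc (n : ℕ) {a : ℝ} (ha : 0 < a) : voronoiSum n a ∈ Icc 0 1 := by
  have hΓ := Gamma_pos_of_pos ha
  have hnonneg : 0 ≤ Gamma a * voronoiSum n a := by
    rw [Gamma_mul_voronoiSum n ha]
    exact setIntegral_nonneg measurableSet_Ioi fun t ht ↦
      mul_nonneg (one_sub_exp_neg_pow_nonneg n (le_of_lt ht))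
        (mul_nonneg (exp_pos _).le (rpow_nonneg (le_of_lt ht) _))
  have hle : Gamma a * voronoiSum n a ≤ Gamma a * 1 := by
    rw [Gamma_mul_voronoiSum n ha, mul_one, Gamma_eq_integral ha]
    exact setIntegral_mono_on (integrableOn_one_sub_exp_neg_pow_mul n ha)
      (GammaIntegral_convergent ha) measurableSet_Ioi fun t ht ↦
        mul_le_of_le_one_left (mul_nonneg (exp_pos _).le (rpow_nonneg (le_of_lt ht) _))
          (one_sub_exp_neg_pow_le_one n (le_of_lt ht))
  exact ⟨nonneg_of_mul_nonneg_right hnonneg hΓ, le_of_mul_le_mul_left hle hΓ⟩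

lemma monotoneOn_voronoiSum (n : ℕ) : MonotoneOn (voronoiSum n) (Ioi 0) := by
  intro a ha b hb hab
  have hshift : ∀ t ∈ Ioi (0 : ℝ),
      t ^ (b - a) * (exp (-t) * t ^ (a - 1)) = exp (-t) * t ^ (b - 1) := fun t ht ↦ by
    rw [mul_left_comm, ← rpow_add ht, sub_add_sub_cancel]
  have hcheb := integral_mul_integral_le_of_monovaryOn measurableSet_Ioi
    (((monotoneOn_one_sub_exp_neg_pow n).monovaryOn
      (monotoneOn_rpow_Ici_of_exponent_nonneg (sub_nonneg.2 hab))).subset Ioi_subset_Ici_self)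
    (fun t ht ↦ mul_nonneg (exp_pos _).le (rpow_nonneg (le_of_lt ht) _))
    (GammaIntegral_convergent ha) (integrableOn_one_sub_exp_neg_pow_mul n ha)
    ((GammaIntegral_convergent hb).congr_fun (fun t ht ↦ (hshift t ht).symm) measurableSet_Ioi)
    ((integrableOn_one_sub_exp_neg_pow_mul n hb).congr_fun
      (fun t ht ↦ by rw [mul_assoc, hshift t ht]) measurableSet_Ioi)
  rw [← Gamma_mul_voronoiSum n ha, ← Gamma_eq_integral ha,
    setIntegral_congr_fun measurableSet_Ioi hshift, ← Gamma_eq_integral hb,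
    setIntegral_congr_fun measurableSet_Ioi (fun t ht ↦ by rw [mul_assoc, hshift t ht]),
    ← Gamma_mul_voronoiSum n hb] at hcheb
  exact le_of_mul_le_mul_left (by linarith) (mul_pos (Gamma_pos_of_pos ha) (Gamma_pos_of_pos hb))

/-- Properties of the Voronoi probability
`P_v(a,K) = ∑_{k=0}^{K-1} (-1)^k (K-1 choose k)/(k+1)^a`:
it lies in `[0,1]` for `a > 0`, tends to `1` as `a → ∞` (fixed `K`), and is
monotone nondecreasing in `a` on `(0, ∞)`. -/
theorem voronoi_probability_properties (K : ℕ) (hK : 1 ≤ K)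
    (Pv : ℝ → ℝ)
    (hPv : ∀ a : ℝ, Pv a =
      ∑ k ∈ Finset.range K,
        (-1 : ℝ) ^ k * ((K - 1).choose k : ℝ) / ((k : ℝ) + 1) ^ a) :
    (∀ a : ℝ, 0 < a → Pv a ∈ Set.Icc (0 : ℝ) 1) ∧
      Tendsto Pv atTop (nhds 1) ∧
      (∀ a b : ℝ, 0 < a → a ≤ b → Pv a ≤ Pv b) := by
  obtain ⟨n, rfl⟩ := Nat.exists_eq_add_of_le' hK
  obtain rfl : Pv = voronoiSum n := funext fun a ↦ by simp [hPv, voronoiSum]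
  exact ⟨fun a ha ↦ voronoiSum_mem_Icc n ha, tendsto_voronoiSum_atTop n,
    fun a b ha hab ↦ monotoneOn_voronoiSum n ha (ha.trans_le hab) hab⟩
end
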